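/- Let g : ℝ₊ → ℝ be measurable with λ_{ℝ₊} g^{−1} absolutely continuous with respect to Lebesgue measure. Let (Tᵢ) be Poisson jump times and (Δᵢ) i.i.d. real random variables with law σ without atom at 0, independent of (Tᵢ), such that the series I = Σ_{i≥1} Δᵢ g(Tᵢ) converges a.s. Then the law of I is absolutely continuous with respect to Lebesgue measure on ℝ. -/

import Mathlib

/-!
Write `I = Δ₀ g(T₁) + R(T₂, Δ₁, (Eⱼ, Δⱼ)_{j ≥ 2})` with `T₂ = T₁ + E₁`. The laws of `T₁` and `E₁`
are dominated by Lebesgue measure on `(0, ∞)` and on `ℝ`, and the shear `(t₁, e₁) ↦ (t₁, t₁ + e₁)`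
preserves the dominating product measure; after it, `T₁` is independent of everything `R` sees.
For fixed `Δ₀ = δ ≠ 0` and fixed `R = c`, the variable `δ g(T₁) + c` is an affine image of `g(T₁)`,
whose law is absolutely continuous by hypothesis, and affine bijections preserve Lebesgue null sets.
-/

open MeasureTheory ProbabilityTheory Filter
open scoped ENNReal

/-- Jump times of a Poisson process: partial sums of the interarrival times `E`. -/
noncomputable def jumpTime {Ω : Type*} (E : ℕ → Ω → ℝ) (i : ℕ) (ω : Ω) : ℝ :=
  ∑ j ∈ Finset.range i, E j ω

open scoped Topology

/-- `u j` is the pair (`j`-th interarrival time, `j`-th mark) and `t` the time origin. -/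
noncomputable def shotNoisePartialSum (g : ℝ → ℝ) (t : ℝ) (u : ℕ → ℝ × ℝ) (n : ℕ) : ℝ :=
  ∑ i ∈ Finset.range n, (u i).2 * g (t + ∑ j ∈ Finset.range (i + 1), (u j).1)

/-- Only meaningful where the partial sums converge (`limUnder` is a junk value otherwise). -/
noncomputable def shotNoise (g : ℝ → ℝ) (t : ℝ) (u : ℕ → ℝ × ℝ) : ℝ :=
  limUnder atTop (shotNoisePartialSum g t u)

lemma shotNoisePartialSum_succ (g : ℝ → ℝ) (t : ℝ) (u : ℕ → ℝ × ℝ) (n : ℕ) :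
    shotNoisePartialSum g t u (n + 1) =
      (u 0).2 * g (t + (u 0).1) + shotNoisePartialSum g (t + (u 0).1) (fun j => u (j + 1)) n := by
  rw [shotNoisePartialSum, Finset.sum_range_succ', add_comm]
  congr 1
  · simp
  · refine Finset.sum_congr rfl fun i _ => ?_
    rw [Finset.sum_range_succ' _ (i + 1), add_assoc, add_comm _ (u 0).1]

lemma tendsto_shotNoisePartialSum_tail {g : ℝ → ℝ} {t c : ℝ} {u : ℕ → ℝ × ℝ}
    (h : Tendsto (shotNoisePartialSum g t u) atTop (𝓝 c)) :
    Tendsto (shotNoisePartialSum g (t + (u 0).1) (fun j => u (j + 1))) atTop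
      (𝓝 (c - (u 0).2 * g (t + (u 0).1))) := by
  have := (h.comp (tendsto_add_atTop_nat 1)).sub_const ((u 0).2 * g (t + (u 0).1))
  simpa [Function.comp_def, shotNoisePartialSum_succ] using this

lemma measurable_shotNoisePartialSum {g : ℝ → ℝ} (hg : Measurable g) (n : ℕ) :
    Measurable fun p : ℝ × (ℕ → ℝ × ℝ) => shotNoisePartialSum g p.1 p.2 n := by
  unfold shotNoisePartialSum
  fun_prop

lemma measurable_shotNoise {g : ℝ → ℝ} (hg : Measurable g) :
    Measurable fun p : ℝ × (ℕ → ℝ × ℝ) => shotNoise g p.1 p.2 :=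
  (StronglyMeasurable.limUnder fun n =>
    (measurable_shotNoisePartialSum hg n).stronglyMeasurable).measurable

lemma eq_add_add_shotNoise_of_tendsto {g : ℝ → ℝ} {t c : ℝ} {u : ℕ → ℝ × ℝ}
    (h : Tendsto (shotNoisePartialSum g t u) atTop (𝓝 c)) :
    c = (u 0).2 * g (t + (u 0).1) + ((u 1).2 * g (t + (u 0).1 + (u 1).1) +
      shotNoise g (t + (u 0).1 + (u 1).1) fun j => u (j + 2)) := by
  have h₂ := (tendsto_shotNoisePartialSum_tail (tendsto_shotNoisePartialSum_tail h)).limUnder_eq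
  change shotNoise g (t + (u 0).1 + (u 1).1) (fun j => u (j + 2)) = _ at h₂
  rw [h₂]
  ring

lemma gammaMeasure_absolutelyContinuous_restrict_Ioi (a r : ℝ) :
    gammaMeasure a r ≪ volume.restrict (Set.Ioi 0) := by
  have hpdf : gammaPDF a r = (Set.Ici 0).indicator (gammaPDF a r) := by
    ext x
    by_cases hx : 0 ≤ x
    · simp [hx]
    · simp [hx, gammaPDF_of_neg (not_le.mp hx)]
  rw [gammaMeasure, hpdf, withDensity_indicator measurableSet_Ici,
    Measure.restrict_congr_set Ioi_ae_eq_Ici.symm]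
  exact withDensity_absolutelyContinuous _ _

namespace ProbabilityTheory

lemma iIndepFun.indepFun_head_tail {Ω β : Type*} [MeasurableSpace Ω] [MeasurableSpace β]
    {μ : Measure Ω} {X : ℕ → Ω → β} (hX : ∀ i, Measurable (X i)) (h : iIndepFun X μ) :
    IndepFun (X 0) (fun ω j => X (j + 1) ω) μ := by
  rw [iIndepFun_iff_iIndep] at h
  have hsplit := indep_iSup_of_disjoint (fun i => (hX i).comap_le) h
    (S := {0}) (T := Set.Ioi 0) (by simp)
  rw [IndepFun_iff_Indep]
  refine indep_of_indep_of_le_right (indep_of_indep_of_le_left hsplit ?_) ?_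
  · exact le_iSup₂ (f := fun i (_ : i ∈ ({0} : Set ℕ)) => MeasurableSpace.comap (X i) _) 0 rfl
  · rw [MeasurableSpace.pi, MeasurableSpace.comap_iSup]
    refine iSup_le fun j => ?_
    rw [MeasurableSpace.comap_comp]
    exact le_iSup₂ (f := fun i (_ : i ∈ Set.Ioi 0) => MeasurableSpace.comap (X i) _) (j + 1)
      j.succ_pos

lemma iIndepFun.map_head_second_tail {Ω β : Type*} [MeasurableSpace Ω] [MeasurableSpace β]
    {μ : Measure Ω} [IsFiniteMeasure μ] {X : ℕ → Ω → β} (hX : ∀ i, Measurable (X i))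
    (h : iIndepFun X μ) :
    μ.map (fun ω => (X 0 ω, (X 1 ω, fun j => X (j + 2) ω))) =
      (μ.map (X 0)).prod ((μ.map (X 1)).prod (μ.map fun ω j => X (j + 2) ω)) := by
  have htail : Measurable fun ω j => X (j + 2) ω := measurable_pi_lambda _ fun j => hX (j + 2)
  have h12 : IndepFun (X 1) (fun ω j => X (j + 2) ω) μ :=
    (h.precomp Nat.succ_injective).indepFun_head_tail fun i => hX (i + 1)
  have h0 : IndepFun (X 0) (fun ω => (X 1 ω, fun j => X (j + 2) ω)) μ :=
    (h.indepFun_head_tail hX).comp measurable_id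
      ((measurable_pi_apply 0).prodMk (measurable_pi_lambda _ fun j => measurable_pi_apply (j + 1)))
  rw [(indepFun_iff_map_prod_eq_prod_map_map (hX 0).aemeasurable
    ((hX 1).prodMk htail).aemeasurable).mp h0,
    (indepFun_iff_map_prod_eq_prod_map_map (hX 1).aemeasurable htail.aemeasurable).mp h12]

end ProbabilityTheory

lemma volume_preimage_mul_add_eq_zero {δ : ℝ} (hδ : δ ≠ 0) (c : ℝ) {A : Set ℝ}
    (hA : volume A = 0) : volume ((fun y => δ * y + c) ⁻¹' A) = 0 := by
  change volume ((δ * ·) ⁻¹' ((· + c) ⁻¹' A)) = 0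
  rw [Real.volume_preimage_mul_left hδ, measure_preimage_add_right, hA, mul_zero]

lemma map_prod_mul_add_absolutelyContinuous {β : Type*} [MeasurableSpace β]
    {μ σ : Measure ℝ} [SFinite μ] [SFinite σ] {κ : Measure β} [SFinite κ] (hσ0 : σ {0} = 0)
    {g : ℝ → ℝ} (hg : Measurable g) (hgac : μ.map g ≪ volume) {H : β → ℝ} (hH : Measurable H) :
    ((μ.prod σ).prod κ).map (fun p => p.1.2 * g p.1.1 + H p.2) ≪ volume := by
  have hF : Measurable fun p : (ℝ × ℝ) × β => p.1.2 * g p.1.1 + H p.2 := by fun_prop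
  refine Measure.AbsolutelyContinuous.mk fun A hA hA0 => ?_
  have hslice (b : β) (δ : ℝ) (hδ : δ ≠ 0) : μ {x | δ * g x + H b ∈ A} = 0 := by
    have hm : Measurable fun y => δ * y + H b := by fun_prop
    have := hgac (volume_preimage_mul_add_eq_zero hδ (H b) hA0)
    rwa [Measure.map_apply hg (hm hA)] at this
  have hδ : ∀ᵐ δ ∂σ, δ ≠ 0 := measure_eq_zero_iff_ae_notMem.mp hσ0
  rw [Measure.map_apply hF hA, Measure.prod_apply_symm (hF hA)]
  refine (lintegral_congr fun b => ?_).trans lintegral_zero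
  rw [Measure.prod_apply_symm (measurable_prodMk_right (hF hA))]
  exact (lintegral_congr_ae (hδ.mono fun δ hδ => hslice b δ hδ)).trans lintegral_zero

lemma measurePreserving_shear {β : Type*} [MeasurableSpace β]
    (μ σ τ : Measure ℝ) [SFinite μ] [SFinite σ] [SFinite τ] (κ : Measure β) [SFinite κ] :
    MeasurePreserving
      (fun q : (ℝ × ℝ) × ((ℝ × ℝ) × β) => (q.1, ((q.1.1 + q.2.1.1, q.2.1.2), q.2.2)))
      ((μ.prod σ).prod ((volume.prod τ).prod κ)) ((μ.prod σ).prod ((volume.prod τ).prod κ)) :=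
  (MeasurePreserving.id _).skew_product
    (g := fun (p : ℝ × ℝ) (q : (ℝ × ℝ) × β) => ((p.1 + q.1.1, q.1.2), q.2)) (by fun_prop) <|
    ae_of_all _ fun p =>
      (((measurePreserving_add_left volume p.1).prod (.id τ)).prod (.id κ)).map_eq

lemma map_mul_add_shifted_absolutelyContinuous {β : Type*} [MeasurableSpace β]
    {ρ₀ ρ₁ σ τ : Measure ℝ} [SFinite ρ₀] [SFinite ρ₁] [SFinite σ] [SFinite τ]
    {κ : Measure β} [SFinite κ] (hρ₁ : ρ₁ ≪ volume) (hσ0 : σ {0} = 0)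
    {g : ℝ → ℝ} (hg : Measurable g) (hgac : ρ₀.map g ≪ volume)
    {H : (ℝ × ℝ) × β → ℝ} (hH : Measurable H) :
    ((ρ₀.prod σ).prod ((ρ₁.prod τ).prod κ)).map
      (fun q => q.1.2 * g q.1.1 + H ((q.1.1 + q.2.1.1, q.2.1.2), q.2.2)) ≪ volume := by
  have hshear := measurePreserving_shear ρ₀ σ τ κ
  have hF : Measurable fun q : (ℝ × ℝ) × ((ℝ × ℝ) × β) => q.1.2 * g q.1.1 + H q.2 := by fun_prop
  have hdom : (ρ₀.prod σ).prod ((ρ₁.prod τ).prod κ) ≪ (ρ₀.prod σ).prod ((volume.prod τ).prod κ) :=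
    Measure.AbsolutelyContinuous.rfl.prod ((hρ₁.prod .rfl).prod .rfl)
  refine (hdom.map (hF.comp hshear.measurable)).trans ?_
  rw [← Measure.map_map hF hshear.measurable, hshear.map_eq]
  exact map_prod_mul_add_absolutelyContinuous hσ0 hg hgac hH

theorem shotNoise_linear_law_absolutelyContinuous_general {Ω : Type*} [MeasurableSpace Ω]
    (P : Measure Ω) [IsProbabilityMeasure P] (α : ℝ) (hα : 0 < α)
    (E : ℕ → Ω → ℝ) (Δ : ℕ → Ω → ℝ)
    (hE : ∀ j, Measurable (E j)) (hΔ : ∀ j, Measurable (Δ j))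
    (σ : Measure ℝ) [IsProbabilityMeasure σ] (hσ0 : σ {0} = 0)
    (hindep : iIndepFun (fun j ω => (E j ω, Δ j ω)) P)
    (hlaw : ∀ j, P.map (fun ω => (E j ω, Δ j ω)) = (expMeasure α).prod σ)
    (g : ℝ → ℝ) (hg : Measurable g)
    (hgac : (volume.restrict (Set.Ioi (0 : ℝ))).map g ≪ (volume : Measure ℝ))
    (I : Ω → ℝ)
    (hconv : ∀ᵐ ω ∂P,
      Tendsto (fun n => ∑ i ∈ Finset.range n, Δ i ω * g (jumpTime E (i + 1) ω))
        atTop (nhds (I ω))) :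
    P.map I ≪ (volume : Measure ℝ) := by
  set U : ℕ → Ω → ℝ × ℝ := fun j ω => (E j ω, Δ j ω)
  have hU : ∀ j, Measurable (U j) := fun j => (hE j).prodMk (hΔ j)
  set R : (ℝ × ℝ) × (ℕ → ℝ × ℝ) → ℝ := fun b => b.1.2 * g b.1.1 + shotNoise g b.1.1 b.2
  have hR : Measurable R := by
    have := measurable_shotNoise hg
    fun_prop
  have hI_eq : I =ᵐ[P]
      fun ω => Δ 0 ω * g (E 0 ω) + R ((E 0 ω + E 1 ω, Δ 1 ω), fun j => U (j + 2) ω) := by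
    filter_upwards [hconv] with ω hω
    have h := eq_add_add_shotNoise_of_tendsto (g := g) (t := 0) (u := fun j => U j ω)
      (hω.congr fun n => by simp [shotNoisePartialSum, jumpTime, U])
    simpa using h
  have hΨ : Measurable fun ω => (U 0 ω, (U 1 ω, fun j => U (j + 2) ω)) :=
    (hU 0).prodMk ((hU 1).prodMk (measurable_pi_lambda _ fun j => hU (j + 2)))
  have hlawΨ := hindep.map_head_second_tail hU
  rw [hlaw 0, hlaw 1] at hlawΨ
  have := isProbabilityMeasure_expMeasure hα
  have hexp : (expMeasure α).map g ≪ volume :=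
    ((gammaMeasure_absolutelyContinuous_restrict_Ioi 1 α).map hg).trans hgac
  have key := map_mul_add_shifted_absolutelyContinuous (ρ₁ := expMeasure α) (τ := σ)
    (κ := P.map fun ω j => U (j + 2) ω) (withDensity_absolutelyContinuous _ _) hσ0 hg hexp hR
  rw [← hlawΨ, Measure.map_map (by fun_prop) hΨ] at key
  rwa [Measure.map_congr hI_eq]

/-- If the pushforward `λ_{ℝ₊} g⁻¹` is absolutely continuous with respect to Lebesgue
measure, then the law of the shot noise series `I = Σᵢ Δᵢ g(Tᵢ)` is absolutely continuous
with respect to Lebesgue measure. The `(Tᵢ)` are the jump times of a Poisson process of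
rate `α` and, independently, the `(Δᵢ)` are i.i.d. real random variables with law `σ`
without atom at `0`. -/
theorem shotNoise_linear_law_absolutelyContinuous {Ω : Type*} [MeasurableSpace Ω]
    (P : Measure Ω) [IsProbabilityMeasure P] (α : ℝ) (hα : 0 < α)
    (E : ℕ → Ω → ℝ) (Δ : ℕ → Ω → ℝ)
    (hE : ∀ j, Measurable (E j)) (hΔ : ∀ j, Measurable (Δ j))
    (σ : Measure ℝ) [IsProbabilityMeasure σ] (hσ0 : σ {0} = 0)
    (hindep : iIndepFun (fun j ω => (E j ω, Δ j ω)) P)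
    (hlaw : ∀ j, P.map (fun ω => (E j ω, Δ j ω)) = (expMeasure α).prod σ)
    (g : ℝ → ℝ) (hg : Measurable g)
    (hgac : (volume.restrict (Set.Ioi (0 : ℝ))).map g ≪ (volume : Measure ℝ))
    (I : Ω → ℝ) (hI : Measurable I)
    (hconv : ∀ᵐ ω ∂P,
      Tendsto (fun n => ∑ i ∈ Finset.range n, Δ i ω * g (jumpTime E (i + 1) ω))
        atTop (nhds (I ω))) :
    P.map I ≪ (volume : Measure ℝ) :=
  shotNoise_linear_law_absolutelyContinuous_general P α hα E Δ hE hΔ σ hσ0 hindep hlaw g hg hgac I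
    hconv
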